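/- arXiv:2302.13727 — 3 statements merged into one kernel-verified Lean document; each statement's English description precedes it below -/
import Mathlib

section
/- Let 0 < α < N with α > 1, and let f be a nonnegative radially symmetric function in L¹(ℝᴺ) satisfying f(|x|)·|x|^N → 0 as |x| → ∞. Then ∫_{ℝᴺ} f(y)/|x−y|^{N−α} dy = ‖f‖_{L¹}/|x|^{N−α} + o(|x|^{−(N−α)}) as |x| → ∞. -/
/-!
Split the integral at the ball `B(x, ‖x‖/2)`, with `p = N - α`. Off the ball `‖x‖ ≤ 2‖x - y‖`,
so the rescaled kernel `‖x‖^p / ‖x - y‖^p` is bounded by `2^p` and tends to `1` pointwise: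
dominated convergence gives `∫ f`. On the ball `‖y‖ ≥ ‖x‖/2`, so the decay of `f` gives
`|f y| ≤ δ (‖x‖/2)^(-N)`, while `∫_{B(x,r)} ‖x - y‖^(-p) dy = r^(N-p) ∫_{B(0,1)} ‖z‖^(-p) dz`
is finite because `p < N`; the powers of `‖x‖` cancel and the ball contributes `O(δ)`.
-/

open MeasureTheory Filter Metric Set Topology Module

lemma rpow_mul_rpow_neg_eq_div_rpow {a b : ℝ} (p : ℝ) (ha : 0 ≤ a) (hb : 0 ≤ b) :
    a ^ p * b ^ (-p) = (a / b) ^ p := by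
  rw [Real.div_rpow ha hb, Real.rpow_neg hb, div_eq_mul_inv]

section SeminormedAddCommGroup

variable {E : Type*} [SeminormedAddCommGroup E]

lemma preimage_sub_left_ball_zero (x : E) (ρ : ℝ) : (x - ·) ⁻¹' ball 0 ρ = ball x ρ := by
  ext y
  simp [dist_eq_norm, norm_sub_rev]

lemma exists_forall_le_norm_abs_le {g : E → ℝ} (hg : Tendsto g (comap norm atTop) (𝓝 0))
    {δ : ℝ} (hδ : 0 < δ) : ∃ M, ∀ y, M ≤ ‖y‖ → |g y| ≤ δ := by
  have := (atTop_basis.comap (norm : E → ℝ)).eventually_iff.1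
    (hg.eventually (Metric.closedBall_mem_nhds 0 hδ))
  simpa [Real.dist_eq] using this

lemma tendsto_norm_div_norm_sub (y : E) :
    Tendsto (fun x => ‖x‖ / ‖x - y‖) (comap norm atTop) (𝓝 1) := by
  have hnorm : Tendsto (fun x : E => ‖x‖) (comap norm atTop) atTop := tendsto_comap
  suffices Tendsto (fun x => ‖x - y‖ / ‖x‖) (comap norm atTop) (𝓝 1) by
    simpa using this.inv₀ one_ne_zero
  rw [tendsto_iff_norm_sub_tendsto_zero]
  refine squeeze_zero' (Eventually.of_forall fun _ => norm_nonneg _) ?_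
    ((tendsto_const_nhds (x := ‖y‖)).div_atTop hnorm)
  filter_upwards [hnorm.eventually_gt_atTop 0] with x hx
  rw [div_sub_one hx.ne', norm_div, Real.norm_of_nonneg hx.le, Real.norm_eq_abs]
  gcongr
  simpa using abs_norm_sub_norm_le (x - y) x

lemma norm_le_norm_sub_of_notMem_ball_half {x y : E} (hy : y ∉ ball x (‖x‖ / 2)) :
    ‖x‖ ≤ 2 * ‖x - y‖ := by
  rw [mem_ball', not_lt, dist_eq_norm] at hy
  linarith

lemma norm_half_le_of_mem_ball_half {x y : E} (hy : y ∈ ball x (‖x‖ / 2)) :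
    ‖x‖ / 2 ≤ ‖y‖ := by
  rw [mem_ball', dist_eq_norm] at hy
  linarith [norm_sub_norm_le x y]

noncomputable def scaledRieszIntegrand (p : ℝ) (f : E → ℝ) (x y : E) : ℝ :=
  ‖x‖ ^ p * (f y * ‖x - y‖ ^ (-p))

variable {p : ℝ} {f : E → ℝ}

lemma norm_scaledRieszIntegrand_le_of_notMem_ball (hp : 0 ≤ p) {x y : E} (hx : 0 < ‖x‖)
    (hy : y ∉ ball x (‖x‖ / 2)) : ‖scaledRieszIntegrand p f x y‖ ≤ 2 ^ p * ‖f y‖ := by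
  have hxy := norm_le_norm_sub_of_notMem_ball_half hy
  have hxy0 : 0 < ‖x - y‖ := by linarith
  have hratio : ‖x‖ ^ p * ‖x - y‖ ^ (-p) ≤ 2 ^ p := by
    rw [rpow_mul_rpow_neg_eq_div_rpow p (norm_nonneg _) hxy0.le]
    exact Real.rpow_le_rpow (by positivity) ((div_le_iff₀ hxy0).2 hxy) hp
  rw [scaledRieszIntegrand, norm_mul, norm_mul, Real.norm_of_nonneg (by positivity),
    Real.norm_of_nonneg (by positivity : (0 : ℝ) ≤ ‖x - y‖ ^ (-p))]
  nlinarith [norm_nonneg (f y)]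

lemma abs_le_rpow_neg_of_mem_ball_half {d δ M : ℝ} (hd : 0 ≤ d)
    (hM : ∀ y, M ≤ ‖y‖ → |f y * ‖y‖ ^ d| ≤ δ) {x y : E} (hx : 0 < ‖x‖) (hxM : 2 * M ≤ ‖x‖)
    (hy : y ∈ ball x (‖x‖ / 2)) : |f y| ≤ δ * (‖x‖ / 2) ^ (-d) := by
  have hyx := norm_half_le_of_mem_ball_half hy
  have hy0 : 0 < ‖y‖ := by linarith
  have hfy := hM y (by linarith)
  rw [abs_mul, abs_of_nonneg (by positivity : (0 : ℝ) ≤ ‖y‖ ^ d)] at hfy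
  calc |f y| = |f y| * ‖y‖ ^ d * ‖y‖ ^ (-d) := by
        rw [Real.rpow_neg hy0.le, mul_assoc, mul_inv_cancel₀ (by positivity), mul_one]
    _ ≤ δ * ‖y‖ ^ (-d) := by gcongr
    _ ≤ δ * (‖x‖ / 2) ^ (-d) := by
        have hδ : 0 ≤ δ := le_trans (by positivity) hfy
        exact mul_le_mul_of_nonneg_left
          (Real.rpow_le_rpow_of_nonpos (by positivity) hyx (neg_nonpos.2 hd)) hδ

lemma norm_rpow_mul_integral_div_eq_integral_scaledRieszIntegrand [MeasurableSpace E]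
    {μ : Measure E} (x : E) :
    ‖x‖ ^ p * ∫ y, f y / ‖x - y‖ ^ p ∂μ = ∫ y, scaledRieszIntegrand p f x y ∂μ := by
  rw [← integral_const_mul]
  simp only [scaledRieszIntegrand, Real.rpow_neg (norm_nonneg _), div_eq_mul_inv]

end SeminormedAddCommGroup

section HaarMeasure

variable {E : Type*} [NormedAddCommGroup E] [MeasurableSpace E] [BorelSpace E] {μ : Measure E}
  {p : ℝ} {f : E → ℝ}

lemma aestronglyMeasurable_scaledRieszIntegrand (hf : AEStronglyMeasurable f μ) (x : E) :
    AEStronglyMeasurable (scaledRieszIntegrand p f x) μ :=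
  (hf.mul (by fun_prop : Measurable fun y => ‖x - y‖ ^ (-p)).aestronglyMeasurable).const_mul _

lemma tendsto_setIntegral_compl_ball_half (hp : 0 ≤ p) (hf : Integrable f μ) :
    Tendsto (fun x => ∫ y in (ball x (‖x‖ / 2))ᶜ, scaledRieszIntegrand p f x y ∂μ)
      (comap norm atTop) (𝓝 (∫ y, f y ∂μ)) := by
  have hnorm : Tendsto (fun x : E => ‖x‖) (comap norm atTop) atTop := tendsto_comap
  simp_rw [← integral_indicator measurableSet_ball.compl]
  refine tendsto_integral_filter_of_dominated_convergence (fun y => 2 ^ p * ‖f y‖)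
    (Eventually.of_forall fun x =>
      (aestronglyMeasurable_scaledRieszIntegrand hf.1 x).indicator measurableSet_ball.compl)
    ?_ (hf.norm.const_mul _) (ae_of_all _ fun y => ?_)
  · filter_upwards [hnorm.eventually_gt_atTop 0] with x hx
    refine ae_of_all _ fun y => ?_
    by_cases hy : y ∈ ball x (‖x‖ / 2)
    · simp only [indicator_of_notMem (notMem_compl_iff.2 hy), norm_zero]
      positivity
    · rw [indicator_of_mem (mem_compl hy)]
      exact norm_scaledRieszIntegrand_le_of_notMem_ball hp hx hy
  · have hratio : Tendsto (fun x => f y * (‖x‖ / ‖x - y‖) ^ p) (comap norm atTop) (𝓝 (f y)) := by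
      simpa using ((tendsto_norm_div_norm_sub y).rpow_const (Or.inl one_ne_zero)).const_mul (f y)
    refine hratio.congr' ?_
    filter_upwards [hnorm.eventually_gt_atTop (2 * ‖y‖)] with x hx
    have hy : y ∈ (ball x (‖x‖ / 2))ᶜ := by
      rw [mem_compl_iff, mem_ball', dist_eq_norm, not_lt]
      linarith [norm_sub_norm_le x y]
    rw [indicator_of_mem hy, scaledRieszIntegrand,
      ← rpow_mul_rpow_neg_eq_div_rpow p (norm_nonneg _) (norm_nonneg _)]
    ring

lemma integrableOn_compl_ball_half (hp : 0 ≤ p) (hf : Integrable f μ) {x : E} (hx : 0 < ‖x‖) :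
    IntegrableOn (scaledRieszIntegrand p f x) (ball x (‖x‖ / 2))ᶜ μ :=
  (hf.norm.const_mul (2 ^ p)).integrableOn.mono'
    (aestronglyMeasurable_scaledRieszIntegrand hf.1 x).restrict
    ((ae_restrict_iff' measurableSet_ball.compl).2 (ae_of_all _ fun _ hy =>
      norm_scaledRieszIntegrand_le_of_notMem_ball hp hx hy))

variable [NormedSpace ℝ E] [FiniteDimensional ℝ E] [μ.IsAddHaarMeasure]

lemma integrableOn_ball_norm_sub_rpow_neg (hp : 0 ≤ p) (hpd : p < finrank ℝ E)
    (x : E) (ρ : ℝ) : IntegrableOn (fun y => ‖x - y‖ ^ (-p)) (ball x ρ) μ := by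
  have hd : 1 ≤ finrank ℝ E := by exact_mod_cast hp.trans_lt hpd
  have h0 : IntegrableOn (fun z : E => ‖z‖ ^ (-p)) (ball 0 ρ) μ :=
    integrableOn_ball_of_norm_le_rpow (C := 1) hd hpd
      (ae_of_all _ fun z => by simp [abs_of_nonneg (Real.rpow_nonneg (norm_nonneg z) _)])
      (by fun_prop : Measurable fun z : E => ‖z‖ ^ (-p)).aestronglyMeasurable
  rw [← preimage_sub_left_ball_zero]
  exact ((Measure.measurePreserving_sub_left μ x).integrableOn_comp_preimage
    (MeasurableEquiv.subLeft x).measurableEmbedding).2 h0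

lemma setIntegral_ball_norm_sub_rpow_neg (x : E) {ρ : ℝ} (hρ : 0 < ρ) :
    ∫ y in ball x ρ, ‖x - y‖ ^ (-p) ∂μ
      = ρ ^ ((finrank ℝ E : ℝ) - p) * ∫ z in ball 0 1, ‖z‖ ^ (-p) ∂μ := by
  have htransl : ∫ y in ball x ρ, ‖x - y‖ ^ (-p) ∂μ = ∫ z in ball (0 : E) ρ, ‖z‖ ^ (-p) ∂μ := by
    rw [← preimage_sub_left_ball_zero]
    exact (Measure.measurePreserving_sub_left μ x).setIntegral_preimage_emb
      (MeasurableEquiv.subLeft x).measurableEmbedding (fun z => ‖z‖ ^ (-p)) _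
  have hscale := Measure.setIntegral_comp_smul_of_pos μ (fun z : E => ‖z‖ ^ (-p)) (ball 0 1) hρ
  simp only [norm_smul, Real.norm_of_nonneg hρ.le, Real.mul_rpow hρ.le (norm_nonneg _),
    integral_const_mul, smul_unitBall_of_pos (E := E) hρ, smul_eq_mul] at hscale
  rw [htransl, Real.rpow_sub hρ, Real.rpow_natCast, div_eq_mul_inv, ← Real.rpow_neg hρ.le,
    mul_assoc, hscale, ← mul_assoc, mul_inv_cancel₀ (by positivity), one_mul]

lemma integrableOn_ball_half_and_norm_setIntegral_le (hp : 0 ≤ p) (hpd : p < finrank ℝ E)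
    (hf : AEStronglyMeasurable f μ) {δ M : ℝ}
    (hM : ∀ y, M ≤ ‖y‖ → |f y * ‖y‖ ^ (finrank ℝ E : ℝ)| ≤ δ) {x : E} (hx : 0 < ‖x‖)
    (hxM : 2 * M ≤ ‖x‖) :
    IntegrableOn (scaledRieszIntegrand p f x) (ball x (‖x‖ / 2)) μ ∧
      ‖∫ y in ball x (‖x‖ / 2), scaledRieszIntegrand p f x y ∂μ‖
        ≤ δ * 2 ^ p * ∫ z in ball 0 1, ‖z‖ ^ (-p) ∂μ := by
  set R := ‖x‖
  set d : ℝ := (finrank ℝ E : ℝ)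
  set c := R ^ p * (δ * (R / 2) ^ (-d))
  have hbound : ∀ᵐ y ∂μ.restrict (ball x (R / 2)),
      ‖scaledRieszIntegrand p f x y‖ ≤ c * ‖x - y‖ ^ (-p) := by
    refine (ae_restrict_iff' measurableSet_ball).2 (ae_of_all _ fun y hy => ?_)
    have hfy := abs_le_rpow_neg_of_mem_ball_half (by positivity) hM hx hxM hy
    rw [scaledRieszIntegrand, norm_mul, norm_mul, Real.norm_of_nonneg (by positivity),
      Real.norm_of_nonneg (by positivity : (0 : ℝ) ≤ ‖x - y‖ ^ (-p)), Real.norm_eq_abs]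
    calc R ^ p * (|f y| * ‖x - y‖ ^ (-p)) ≤ R ^ p * (δ * (R / 2) ^ (-d) * ‖x - y‖ ^ (-p)) := by
          gcongr
      _ = c * ‖x - y‖ ^ (-p) := by ring
  have hint := (integrableOn_ball_norm_sub_rpow_neg (μ := μ) hp hpd x (R / 2)).const_mul c
  refine ⟨hint.mono' (aestronglyMeasurable_scaledRieszIntegrand hf x).restrict hbound, ?_⟩
  have hscale : R ^ p * (R / 2) ^ (-d) * (R / 2) ^ (d - p) = 2 ^ p := by
    rw [mul_assoc, ← Real.rpow_add (by positivity), show -d + (d - p) = -p by ring,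
      rpow_mul_rpow_neg_eq_div_rpow p hx.le (by positivity), div_div_cancel₀ hx.ne']
  calc ‖∫ y in ball x (R / 2), scaledRieszIntegrand p f x y ∂μ‖
      ≤ ∫ y in ball x (R / 2), c * ‖x - y‖ ^ (-p) ∂μ := norm_integral_le_of_norm_le hint hbound
    _ = c * ((R / 2) ^ (d - p) * ∫ z in ball 0 1, ‖z‖ ^ (-p) ∂μ) := by
        rw [integral_const_mul, setIntegral_ball_norm_sub_rpow_neg x (by positivity)]
    _ = δ * (R ^ p * (R / 2) ^ (-d) * (R / 2) ^ (d - p)) * ∫ z in ball 0 1, ‖z‖ ^ (-p) ∂μ := by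
        ring
    _ = δ * 2 ^ p * ∫ z in ball 0 1, ‖z‖ ^ (-p) ∂μ := by rw [hscale]

lemma eventually_integrableOn_ball_half_and_norm_setIntegral_le (hp : 0 ≤ p)
    (hpd : p < finrank ℝ E) (hf : AEStronglyMeasurable f μ)
    (hdecay : Tendsto (fun y => f y * ‖y‖ ^ (finrank ℝ E : ℝ)) (comap norm atTop) (𝓝 0))
    {δ : ℝ} (hδ : 0 < δ) : ∀ᶠ x in comap norm atTop,
      IntegrableOn (scaledRieszIntegrand p f x) (ball x (‖x‖ / 2)) μ ∧
        ‖∫ y in ball x (‖x‖ / 2), scaledRieszIntegrand p f x y ∂μ‖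
          ≤ δ * 2 ^ p * ∫ z in ball 0 1, ‖z‖ ^ (-p) ∂μ := by
  have hnorm : Tendsto (fun x : E => ‖x‖) (comap norm atTop) atTop := tendsto_comap
  obtain ⟨M, hM⟩ := exists_forall_le_norm_abs_le hdecay hδ
  filter_upwards [hnorm.eventually_gt_atTop 0, hnorm.eventually_ge_atTop (2 * M)] with x hx hxM
  exact integrableOn_ball_half_and_norm_setIntegral_le hp hpd hf hM hx hxM

lemma tendsto_setIntegral_ball_half (hp : 0 ≤ p) (hpd : p < finrank ℝ E)
    (hf : AEStronglyMeasurable f μ)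
    (hdecay : Tendsto (fun y => f y * ‖y‖ ^ (finrank ℝ E : ℝ)) (comap norm atTop) (𝓝 0)) :
    Tendsto (fun x => ∫ y in ball x (‖x‖ / 2), scaledRieszIntegrand p f x y ∂μ)
      (comap norm atTop) (𝓝 0) := by
  set K := 2 ^ p * ∫ z in ball (0 : E) 1, ‖z‖ ^ (-p) ∂μ
  have hK : 0 ≤ K := mul_nonneg (by positivity)
    (setIntegral_nonneg measurableSet_ball fun z _ => by positivity)
  refine Metric.tendsto_nhds.2 fun ε hε => ?_
  have hδ : 0 < ε / (K + 1) := by positivity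
  filter_upwards [eventually_integrableOn_ball_half_and_norm_setIntegral_le hp hpd hf hdecay hδ]
    with x hx
  rw [dist_zero_right]
  calc _ ≤ ε / (K + 1) * K := by simpa only [mul_assoc] using hx.2
    _ < ε := by
      rw [div_mul_eq_mul_div, div_lt_iff₀ (by positivity)]
      nlinarith

theorem tendsto_norm_rpow_mul_integral_div_norm_sub_rpow (hp : 0 ≤ p)
    (hpd : p < finrank ℝ E) (hf : Integrable f μ)
    (hdecay : Tendsto (fun y => f y * ‖y‖ ^ (finrank ℝ E : ℝ)) (comap norm atTop) (𝓝 0)) :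
    Tendsto (fun x => ‖x‖ ^ p * ∫ y, f y / ‖x - y‖ ^ p ∂μ) (comap norm atTop)
      (𝓝 (∫ y, f y ∂μ)) := by
  have hnorm : Tendsto (fun x : E => ‖x‖) (comap norm atTop) atTop := tendsto_comap
  have hsplit : ∀ᶠ x in comap norm atTop, ‖x‖ ^ p * ∫ y, f y / ‖x - y‖ ^ p ∂μ =
      (∫ y in ball x (‖x‖ / 2), scaledRieszIntegrand p f x y ∂μ) +
        ∫ y in (ball x (‖x‖ / 2))ᶜ, scaledRieszIntegrand p f x y ∂μ := by
    filter_upwards [eventually_integrableOn_ball_half_and_norm_setIntegral_le hp hpd hf.1 hdecay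
      one_pos, hnorm.eventually_gt_atTop 0] with x hnear hx
    have hint : Integrable (scaledRieszIntegrand p f x) μ := by
      simpa using hnear.1.union (integrableOn_compl_ball_half hp hf hx)
    rw [norm_rpow_mul_integral_div_eq_integral_scaledRieszIntegrand,
      integral_add_compl measurableSet_ball hint]
  simpa using ((tendsto_setIntegral_ball_half hp hpd hf.1 hdecay).add
    (tendsto_setIntegral_compl_ball_half hp hf)).congr' (hsplit.mono fun _ h => h.symm)

end HaarMeasure

theorem stmt5_general (N : ℕ) (α : ℝ) (hα1 : 1 < α) (hαN : α < N)
    (f : EuclideanSpace ℝ (Fin N) → ℝ)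
    (hf : Integrable f)
    (hdecay : Tendsto (fun x : EuclideanSpace ℝ (Fin N) => f x * ‖x‖ ^ (N : ℝ))
        (comap (fun x : EuclideanSpace ℝ (Fin N) => ‖x‖) atTop) (nhds 0)) :
    Tendsto (fun x : EuclideanSpace ℝ (Fin N) =>
        ‖x‖ ^ ((N : ℝ) - α) * ∫ y, f y / ‖x - y‖ ^ ((N : ℝ) - α))
      (comap (fun x : EuclideanSpace ℝ (Fin N) => ‖x‖) atTop)
      (nhds (∫ y, f y)) := by
  have hdim : finrank ℝ (EuclideanSpace ℝ (Fin N)) = N := finrank_euclideanSpace_fin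
  refine tendsto_norm_rpow_mul_integral_div_norm_sub_rpow (by linarith) ?_ hf (by rwa [hdim])
  rw [hdim]
  linarith

/-- Lemma 3.10 (case `α > 1`): asymptotics of the Riesz potential of a nonnegative
radial `L¹` function with `f(|x|)|x|^N → 0`. -/
theorem stmt5 (N : ℕ) (hN : 1 ≤ N) (α : ℝ) (hα1 : 1 < α) (hαN : α < N)
    (f : EuclideanSpace ℝ (Fin N) → ℝ)
    (hf : Integrable f) (hfnn : ∀ x, 0 ≤ f x)
    (hrad : ∀ x y : EuclideanSpace ℝ (Fin N), ‖x‖ = ‖y‖ → f x = f y)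
    (hdecay : Tendsto (fun x : EuclideanSpace ℝ (Fin N) => f x * ‖x‖ ^ (N : ℝ))
        (comap (fun x : EuclideanSpace ℝ (Fin N) => ‖x‖) atTop) (nhds 0)) :
    Tendsto (fun x : EuclideanSpace ℝ (Fin N) =>
        ‖x‖ ^ ((N : ℝ) - α) * ∫ y, f y / ‖x - y‖ ^ ((N : ℝ) - α))
      (comap (fun x : EuclideanSpace ℝ (Fin N) => ‖x‖) atTop)
      (nhds (∫ y, f y)) :=
  stmt5_general N α hα1 hαN f hf hdecay
end

section
/- Let N ≥ 1, let m' > N/2 and let m ∈ (0, m']. Then there exist constants c, C > 0 and R > 0 such that for all x ∈ ℝᴺ with |x| ≥ R, c·|x|^{−2m} ≤ ∫_{ℝᴺ} (1+|y−x|²)^{−m} (1+|y|²)^{−m'} dy ≤ C·|x|^{−2m}. -/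
/-!
Write `A = 1 + ‖y - x‖²`, `B = 1 + ‖y‖²` and `D = 1 + ‖x‖² / 4`. For the upper bound, either
`‖y - x‖ ≥ ‖x‖ / 2`, so `A⁻ᵐ ≤ D⁻ᵐ`, or `‖y‖ ≥ ‖x‖ / 2`, so `A ≤ D ≤ B` and, since `m ≤ m'`,
`A⁻ᵐ B⁻ᵐ' ≤ D⁻ᵐ A⁻ᵐ'`. Hence the integrand is at most `D⁻ᵐ (B⁻ᵐ' + A⁻ᵐ')`, whose integral is
`2 D⁻ᵐ ∫ (1 + ‖y‖²)⁻ᵐ'` by translation invariance, and `D⁻ᵐ ≤ 4ᵐ ‖x‖⁻²ᵐ`. For the lower bound,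
restrict the integral to the unit ball, where `B ≤ 2` and `A ≤ 5 ‖x‖²` once `‖x‖ ≥ 1`.
-/

open MeasureTheory Metric Module Real

namespace JapaneseBracket

theorem rpow_neg_mul_rpow_neg_le_of_le_of_le {A B D m m' : ℝ} (hA : 0 < A) (hAD : A ≤ D)
    (hDB : D ≤ B) (hm' : 0 ≤ m') (hmm' : m ≤ m') :
    A ^ (-m) * B ^ (-m') ≤ D ^ (-m) * A ^ (-m') := by
  have hD : 0 < D := hA.trans_le hAD
  calc A ^ (-m) * B ^ (-m')
      ≤ A ^ (-m) * (D ^ (-m) * D ^ (-(m' - m))) := by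
        rw [← rpow_add hD, show -m + -(m' - m) = -m' by ring]
        exact mul_le_mul_of_nonneg_left (rpow_le_rpow_of_nonpos hD hDB (by linarith))
          (rpow_nonneg hA.le _)
    _ ≤ A ^ (-m) * (D ^ (-m) * A ^ (-(m' - m))) :=
        mul_le_mul_of_nonneg_left (mul_le_mul_of_nonneg_left
          (rpow_le_rpow_of_nonpos hA hAD (by linarith)) (rpow_nonneg hD.le _))
          (rpow_nonneg hA.le _)
    _ = D ^ (-m) * A ^ (-m') := by
        rw [mul_left_comm, ← rpow_add hA, show -m + -(m' - m) = -m' by ring]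

theorem one_add_sq_rpow_neg_mul_le {a b r m m' : ℝ} (ha : 0 ≤ a) (hr : 0 ≤ r) (hrab : r ≤ a + b)
    (hm : 0 ≤ m) (hmm' : m ≤ m') :
    (1 + a ^ 2) ^ (-m) * (1 + b ^ 2) ^ (-m') ≤
      (1 + r ^ 2 / 4) ^ (-m) * ((1 + b ^ 2) ^ (-m') + (1 + a ^ 2) ^ (-m')) := by
  have hD : 0 ≤ (1 + r ^ 2 / 4) ^ (-m) := rpow_nonneg (by positivity) _
  have hB : 0 ≤ (1 + b ^ 2) ^ (-m') := rpow_nonneg (by positivity) _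
  have hA : 0 ≤ (1 + a ^ 2) ^ (-m') := rpow_nonneg (by positivity) _
  rw [mul_add]
  rcases le_or_gt (r / 2) a with har | har
  · have hAD : (1 + a ^ 2) ^ (-m) ≤ (1 + r ^ 2 / 4) ^ (-m) :=
      rpow_le_rpow_of_nonpos (by positivity) (by nlinarith) (by linarith)
    linarith [mul_le_mul_of_nonneg_right hAD hB, mul_nonneg hD hA]
  · have := rpow_neg_mul_rpow_neg_le_of_le_of_le (m := m) (m' := m') (by positivity)
      (show 1 + a ^ 2 ≤ 1 + r ^ 2 / 4 by nlinarith)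
      (show 1 + r ^ 2 / 4 ≤ 1 + b ^ 2 by nlinarith) (hm.trans hmm') hmm'
    linarith [mul_nonneg hD hB]

theorem sq_rpow_neg {r : ℝ} (hr : 0 ≤ r) (m : ℝ) : (r ^ 2) ^ (-m) = r ^ (-(2 * m)) := by
  rw [← rpow_natCast_mul hr]
  norm_num

theorem one_add_sq_div_four_rpow_neg_le {r m : ℝ} (hr : 0 < r) (hm : 0 ≤ m) :
    (1 + r ^ 2 / 4) ^ (-m) ≤ 4 ^ m * r ^ (-(2 * m)) :=
  calc (1 + r ^ 2 / 4) ^ (-m)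
      ≤ (r ^ 2 / 4) ^ (-m) := rpow_le_rpow_of_nonpos (by positivity) (by linarith) (by linarith)
    _ = 4 ^ m * r ^ (-(2 * m)) := by
        rw [div_rpow (by positivity) (by norm_num), sq_rpow_neg hr.le,
          rpow_neg (x := 4) (by norm_num), div_inv_eq_mul, mul_comm]

variable {E : Type*} [NormedAddCommGroup E] [NormedSpace ℝ E] [FiniteDimensional ℝ E]
  [MeasurableSpace E] [BorelSpace E] {μ : Measure E} [μ.IsAddHaarMeasure] {m m' : ℝ}

theorem integrable_one_add_norm_sq_rpow_neg (hdim : (finrank ℝ E : ℝ) < 2 * m') :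
    Integrable (fun y : E ↦ (1 + ‖y‖ ^ 2) ^ (-m')) μ := by
  simpa [show -(2 * m') / 2 = -m' by ring] using integrable_rpow_neg_one_add_norm_sq (μ := μ) hdim

theorem integral_one_add_norm_sq_rpow_neg_pos (hdim : (finrank ℝ E : ℝ) < 2 * m') :
    0 < ∫ y : E, (1 + ‖y‖ ^ 2) ^ (-m') ∂μ := by
  rw [integral_pos_iff_support_of_nonneg (fun y ↦ rpow_nonneg (by positivity) _)
    (integrable_one_add_norm_sq_rpow_neg hdim)]
  have hsupp : Function.support (fun y : E ↦ (1 + ‖y‖ ^ 2) ^ (-m')) = Set.univ :=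
    Set.eq_univ_of_forall fun y ↦ (rpow_pos_of_pos (by positivity) _).ne'
  rw [hsupp]
  exact Measure.measure_univ_pos.mpr (NeZero.ne μ)

theorem integrable_one_add_norm_sub_sq_rpow_neg_mul (hm : 0 ≤ m)
    (hdim : (finrank ℝ E : ℝ) < 2 * m') (x : E) :
    Integrable (fun y : E ↦ (1 + ‖y - x‖ ^ 2) ^ (-m) * (1 + ‖y‖ ^ 2) ^ (-m')) μ := by
  refine (integrable_one_add_norm_sq_rpow_neg hdim).mono' (by fun_prop) (ae_of_all _ fun y ↦ ?_)
  have hA : (1 + ‖y - x‖ ^ 2) ^ (-m) ≤ 1 :=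
    rpow_le_one_of_one_le_of_nonpos (by nlinarith [norm_nonneg (y - x)]) (by linarith)
  rw [norm_of_nonneg (by positivity)]
  exact mul_le_of_le_one_left (rpow_nonneg (by positivity) _) hA

theorem integral_one_add_norm_sub_sq_rpow_neg_mul_le (hm : 0 ≤ m) (hmm' : m ≤ m')
    (hdim : (finrank ℝ E : ℝ) < 2 * m') (x : E) :
    ∫ y : E, (1 + ‖y - x‖ ^ 2) ^ (-m) * (1 + ‖y‖ ^ 2) ^ (-m') ∂μ ≤
      (1 + ‖x‖ ^ 2 / 4) ^ (-m) * (2 * ∫ y : E, (1 + ‖y‖ ^ 2) ^ (-m') ∂μ) := by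
  have hK := integrable_one_add_norm_sq_rpow_neg (μ := μ) hdim
  have hKx : Integrable (fun y : E ↦ (1 + ‖y - x‖ ^ 2) ^ (-m')) μ := hK.comp_sub_right x
  calc ∫ y : E, (1 + ‖y - x‖ ^ 2) ^ (-m) * (1 + ‖y‖ ^ 2) ^ (-m') ∂μ
      ≤ ∫ y : E, (1 + ‖x‖ ^ 2 / 4) ^ (-m) *
          ((1 + ‖y‖ ^ 2) ^ (-m') + (1 + ‖y - x‖ ^ 2) ^ (-m')) ∂μ := by
        refine integral_mono (integrable_one_add_norm_sub_sq_rpow_neg_mul hm hdim x)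
          ((hK.add hKx).const_mul _) fun y ↦ ?_
        refine one_add_sq_rpow_neg_mul_le (norm_nonneg _) (norm_nonneg _) ?_ hm hmm'
        simpa [add_comm] using norm_sub_le y (y - x)
    _ = (1 + ‖x‖ ^ 2 / 4) ^ (-m) * (2 * ∫ y : E, (1 + ‖y‖ ^ 2) ^ (-m') ∂μ) := by
        rw [integral_const_mul, integral_add hK hKx,
          integral_sub_right_eq_self (fun y : E ↦ (1 + ‖y‖ ^ 2) ^ (-m')) x, two_mul]

theorem le_integral_one_add_norm_sub_sq_rpow_neg_mul (hm : 0 ≤ m)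
    (hdim : (finrank ℝ E : ℝ) < 2 * m') {x : E} (hx : 1 ≤ ‖x‖) :
    μ.real (ball 0 1) * 2 ^ (-m') * 5 ^ (-m) * ‖x‖ ^ (-(2 * m)) ≤
      ∫ y : E, (1 + ‖y - x‖ ^ 2) ^ (-m) * (1 + ‖y‖ ^ 2) ^ (-m') ∂μ := by
  have hint := integrable_one_add_norm_sub_sq_rpow_neg_mul (μ := μ) hm hdim x
  have hm' : 0 ≤ m' := by linarith [(finrank ℝ E).cast_nonneg (α := ℝ)]
  have hball : ∀ y ∈ ball (0 : E) 1, 2 ^ (-m') * (5 * ‖x‖ ^ 2) ^ (-m) ≤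
      (1 + ‖y - x‖ ^ 2) ^ (-m) * (1 + ‖y‖ ^ 2) ^ (-m') := by
    intro y hy
    rw [mem_ball_zero_iff] at hy
    have hyx : ‖y - x‖ ≤ 2 * ‖x‖ := (norm_sub_le y x).trans (by linarith)
    rw [mul_comm]
    refine mul_le_mul (rpow_le_rpow_of_nonpos (by positivity)
        (by nlinarith [norm_nonneg (y - x)]) (by linarith))
      (rpow_le_rpow_of_nonpos (by positivity) (by nlinarith [norm_nonneg y]) (by linarith))
      (rpow_nonneg (by norm_num) _) (rpow_nonneg (by positivity) _)
  calc μ.real (ball 0 1) * 2 ^ (-m') * 5 ^ (-m) * ‖x‖ ^ (-(2 * m))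
      = 2 ^ (-m') * (5 * ‖x‖ ^ 2) ^ (-m) * μ.real (ball 0 1) := by
        rw [mul_rpow (by norm_num) (by positivity), sq_rpow_neg (norm_nonneg x)]
        ring
    _ ≤ ∫ y in ball (0 : E) 1, (1 + ‖y - x‖ ^ 2) ^ (-m) * (1 + ‖y‖ ^ 2) ^ (-m') ∂μ :=
        setIntegral_ge_of_const_le_real measurableSet_ball measure_ball_lt_top.ne hball
          hint.integrableOn
    _ ≤ _ := setIntegral_le_integral hint (ae_of_all _ fun y ↦ by positivity)

end JapaneseBracket

open JapaneseBracket

theorem stmt6_general (N : ℕ) (m m' : ℝ) (hm' : (N : ℝ) / 2 < m')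
    (hm0 : 0 < m) (hmm' : m ≤ m') :
    ∃ c C R : ℝ, 0 < c ∧ 0 < C ∧ 0 < R ∧
      ∀ x : EuclideanSpace ℝ (Fin N), R ≤ ‖x‖ →
        c * ‖x‖ ^ (-(2 * m)) ≤
          (∫ y : EuclideanSpace ℝ (Fin N),
            (1 + ‖y - x‖ ^ 2) ^ (-m) * (1 + ‖y‖ ^ 2) ^ (-m')) ∧
        (∫ y : EuclideanSpace ℝ (Fin N),
            (1 + ‖y - x‖ ^ 2) ^ (-m) * (1 + ‖y‖ ^ 2) ^ (-m')) ≤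
          C * ‖x‖ ^ (-(2 * m)) := by
  have hdim : (finrank ℝ (EuclideanSpace ℝ (Fin N)) : ℝ) < 2 * m' := by
    rw [finrank_euclideanSpace_fin]
    linarith
  set K := ∫ y : EuclideanSpace ℝ (Fin N), (1 + ‖y‖ ^ 2) ^ (-m')
  have hK : 0 < K := integral_one_add_norm_sq_rpow_neg_pos hdim
  have hball : 0 < volume.real (ball (0 : EuclideanSpace ℝ (Fin N)) 1) :=
    ENNReal.toReal_pos (measure_ball_pos _ _ one_pos).ne' measure_ball_lt_top.ne
  refine ⟨volume.real (ball (0 : EuclideanSpace ℝ (Fin N)) 1) * 2 ^ (-m') * 5 ^ (-m),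
    4 ^ m * (2 * K), 1, by positivity, by positivity, one_pos,
    fun x hx ↦ ⟨le_integral_one_add_norm_sub_sq_rpow_neg_mul hm0.le hdim hx, ?_⟩⟩
  calc _ ≤ (1 + ‖x‖ ^ 2 / 4) ^ (-m) * (2 * K) :=
        integral_one_add_norm_sub_sq_rpow_neg_mul_le hm0.le hmm' hdim x
    _ ≤ 4 ^ m * ‖x‖ ^ (-(2 * m)) * (2 * K) :=
        mul_le_mul_of_nonneg_right (one_add_sq_div_four_rpow_neg_le (by linarith) hm0.le)
          (by linarith)
    _ = 4 ^ m * (2 * K) * ‖x‖ ^ (-(2 * m)) := by ring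

/-- Lemma 3.11: for `m' > N/2` and `0 < m ≤ m'`, the integral
`∫ (1+|y-x|²)^{-m} (1+|y|²)^{-m'} dy` behaves like `|x|^{-2m}` for large `|x|`. -/
theorem stmt6 (N : ℕ) (hN : 1 ≤ N) (m m' : ℝ) (hm' : (N : ℝ) / 2 < m')
    (hm0 : 0 < m) (hmm' : m ≤ m') :
    ∃ c C R : ℝ, 0 < c ∧ 0 < C ∧ 0 < R ∧
      ∀ x : EuclideanSpace ℝ (Fin N), R ≤ ‖x‖ →
        c * ‖x‖ ^ (-(2 * m)) ≤
          (∫ y : EuclideanSpace ℝ (Fin N),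
            (1 + ‖y - x‖ ^ 2) ^ (-m) * (1 + ‖y‖ ^ 2) ^ (-m')) ∧
        (∫ y : EuclideanSpace ℝ (Fin N),
            (1 + ‖y - x‖ ^ 2) ^ (-m) * (1 + ‖y‖ ^ 2) ^ (-m')) ≤
          C * ‖x‖ ^ (-(2 * m)) :=
  stmt6_general N m m' hm' hm0 hmm'
end

section
/- Let N ≥ 3, L₀ > 0, and suppose u : ℝᴺ → (0,∞) is a C² radial, radially nonincreasing function satisfying −Δu + (κ²/2)·u ≤ 0 for all |x| ≥ R₀ := L₀/κ, where κ > 0, with u(R₀) ≤ M. If L₀ ≥ 2(N−1), then u(x) ≤ M·e^{L₀/2}·e^{−κ|x|/2} for all |x| ≥ R₀. -/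
open Set Filter Topology Real

/-!
Instead of the comparison function of the paper, we argue on the radial profile
`g r = u (r • e₀)` directly. As `u` is radially nonincreasing, its Hessian at `r • e₀` is
nonpositive in the directions orthogonal to `e₀`, so `Δu ≤ g''` there; with `μ = κ/2` this gives
`g'' ≥ μ² g` and `g' ≤ 0` on `[R₀, ∞)`. Then `h = g' + μ g` satisfies `h' ≥ μ h`, so
`h e^{-μ r}` is nondecreasing; since `h ≤ μ g(R₀)` is bounded above, `h ≤ 0`, which says that
`g(r) e^{μ r}` is nonincreasing on `[R₀, ∞)`.
-/

theorem IsLocalMax.deriv_deriv_nonpos {f : ℝ → ℝ} {x₀ : ℝ} (h : IsLocalMax f x₀)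
    (hc : ContinuousAt f x₀) : deriv (deriv f) x₀ ≤ 0 := by
  by_contra! hpos
  have hmin := isLocalMin_of_deriv_deriv_pos hpos h.deriv_eq_zero hc
  have hconst : f =ᶠ[𝓝 x₀] fun _ => f x₀ :=
    (h.and hmin).mono fun _ hx => le_antisymm hx.1 hx.2
  have : deriv (deriv f) x₀ = 0 := by simp [hconst.deriv.deriv_eq]
  exact hpos.ne' this

section DecayODE

variable {μ R₀ : ℝ}

theorem monotoneOn_mul_exp_neg_of_le_deriv {h h' : ℝ → ℝ} (hh : ∀ r, HasDerivAt h (h' r) r)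
    (hh' : ∀ r ∈ Ici R₀, μ * h r ≤ h' r) :
    MonotoneOn (fun r => h r * exp (-μ * r)) (Ici R₀) := by
  have hderiv : ∀ r, HasDerivAt (fun r => h r * exp (-μ * r))
      ((h' r - μ * h r) * exp (-μ * r)) r := fun r =>
    ((hh r).mul ((hasDerivAt_id' r).const_mul (-μ)).exp).congr_deriv (by ring)
  refine monotoneOn_of_hasDerivWithinAt_nonneg (convex_Ici R₀)
    (fun r _ => (hderiv r).continuousAt.continuousWithinAt)
    (fun r _ => (hderiv r).hasDerivWithinAt) fun r hr => ?_
  exact mul_nonneg (by linarith [hh' r (interior_subset hr)]) (exp_pos _).le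

theorem nonpos_of_monotoneOn_mul_exp_neg {h : ℝ → ℝ} (hμ : 0 < μ)
    (hmono : MonotoneOn (fun r => h r * exp (-μ * r)) (Ici R₀))
    (hbdd : BddAbove (h '' Ici R₀)) : ∀ r ∈ Ici R₀, h r ≤ 0 := by
  obtain ⟨B, hB⟩ := hbdd
  intro r hr
  by_contra! hpos
  set t := |B| / (μ * h r)
  have ht : 0 ≤ t := by positivity
  have hgrowth : h r * exp (μ * t) ≤ h (r + t) := by
    have := hmono hr (mem_Ici.2 (le_add_of_le_of_nonneg hr ht)) (le_add_of_nonneg_right ht)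
    have hsplit : exp (-μ * r) = exp (μ * t) * exp (-μ * (r + t)) := by
      rw [← exp_add]; ring_nf
    simp only [hsplit, ← mul_assoc] at this
    exact le_of_mul_le_mul_right this (exp_pos _)
  have hlinear : h r * (μ * t + 1) = |B| + h r := by
    simp only [t]
    field_simp
  have hB' := hB (mem_image_of_mem h (mem_Ici.2 (le_add_of_le_of_nonneg hr ht)))
  nlinarith [add_one_le_exp (μ * t), le_abs_self B]

theorem antitoneOn_mul_exp_of_sq_mul_le_deriv2 {g g' g'' : ℝ → ℝ} (hμ : 0 < μ)
    (hg : ∀ r, HasDerivAt g (g' r) r) (hg' : ∀ r, HasDerivAt g' (g'' r) r)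
    (hg'_nonpos : ∀ r ∈ Ici R₀, g' r ≤ 0) (hg'' : ∀ r ∈ Ici R₀, μ ^ 2 * g r ≤ g'' r) :
    AntitoneOn (fun r => g r * exp (μ * r)) (Ici R₀) := by
  have hanti : AntitoneOn g (Ici R₀) :=
    antitoneOn_of_hasDerivWithinAt_nonpos (convex_Ici R₀)
      (fun r _ => (hg r).continuousAt.continuousWithinAt)
      (fun r _ => (hg r).hasDerivWithinAt) fun r hr => hg'_nonpos r (interior_subset hr)
  have hbdd : BddAbove ((fun r => g' r + μ * g r) '' Ici R₀) := by
    refine ⟨μ * g R₀, ?_⟩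
    rintro _ ⟨r, hr, rfl⟩
    nlinarith [hg'_nonpos r hr, hanti self_mem_Ici hr hr]
  have hnonpos := nonpos_of_monotoneOn_mul_exp_neg hμ
    (monotoneOn_mul_exp_neg_of_le_deriv (h := fun r => g' r + μ * g r)
      (fun r => (hg' r).add ((hg r).const_mul μ)) fun r hr => by linarith [hg'' r hr]) hbdd
  have hderiv : ∀ r, HasDerivAt (fun r => g r * exp (μ * r))
      ((g' r + μ * g r) * exp (μ * r)) r := fun r =>
    ((hg r).mul ((hasDerivAt_id' r).const_mul μ).exp).congr_deriv (by ring)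
  refine antitoneOn_of_hasDerivWithinAt_nonpos (convex_Ici R₀)
    (fun r _ => (hderiv r).continuousAt.continuousWithinAt)
    (fun r _ => (hderiv r).hasDerivWithinAt) fun r hr => ?_
  exact mul_nonpos_of_nonpos_of_nonneg (hnonpos r (interior_subset hr)) (exp_pos _).le

end DecayODE

section LineRestriction

variable {E : Type*} [NormedAddCommGroup E] [NormedSpace ℝ E]

theorem hasDerivAt_comp_add_smul {F : Type*} [NormedAddCommGroup F] [NormedSpace ℝ F]
    {f : E → F} {a v : E} {t : ℝ} (hf : DifferentiableAt ℝ f (a + t • v)) :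
    HasDerivAt (fun s : ℝ => f (a + s • v)) (fderiv ℝ f (a + t • v) v) t :=
  hf.hasFDerivAt.comp_hasDerivAt t (by simpa using ((hasDerivAt_id t).smul_const v).const_add a)

theorem hasDerivAt_comp_smul {F : Type*} [NormedAddCommGroup F] [NormedSpace ℝ F]
    {f : E → F} {v : E} {t : ℝ} (hf : DifferentiableAt ℝ f (t • v)) :
    HasDerivAt (fun s : ℝ => f (s • v)) (fderiv ℝ f (t • v) v) t := by
  simpa using hasDerivAt_comp_add_smul (f := f) (a := 0) (v := v) (by rwa [zero_add])

theorem hasDerivAt_fderiv_apply_comp_add_smul {u : E → ℝ} {a v : E} {t : ℝ}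
    (hu : DifferentiableAt ℝ (fderiv ℝ u) (a + t • v)) :
    HasDerivAt (fun s : ℝ => fderiv ℝ u (a + s • v) v)
      (fderiv ℝ (fderiv ℝ u) (a + t • v) v v) t :=
  (ContinuousLinearMap.apply ℝ ℝ v).hasFDerivAt.comp_hasDerivAt t
    (hasDerivAt_comp_add_smul hu)

variable {u : E → ℝ}

theorem antitoneOn_comp_smul_of_norm_le (hmono : ∀ x y : E, ‖x‖ ≤ ‖y‖ → u y ≤ u x) (e : E) :
    AntitoneOn (fun r : ℝ => u (r • e)) (Ici 0) := fun r hr s hs hrs => by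
  apply hmono
  rw [norm_smul, norm_smul, Real.norm_of_nonneg hr, Real.norm_of_nonneg hs]
  gcongr

theorem fderiv_smul_apply_nonpos (hu : Differentiable ℝ u)
    (hmono : ∀ x y : E, ‖x‖ ≤ ‖y‖ → u y ≤ u x) (e : E) {r : ℝ} (hr : 0 ≤ r) :
    fderiv ℝ u (r • e) e ≤ 0 := by
  exact (hasDerivAt_comp_smul (hu _)).hasDerivWithinAt.nonpos_of_antitoneOn (s := Ici r)
    (by simpa [accPt_principal_iff_nhdsWithin] using nhdsGT_neBot r)
    ((antitoneOn_comp_smul_of_norm_le hmono e).mono (Ici_subset_Ici.2 hr))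

end LineRestriction

section Radial

variable {E : Type*} [NormedAddCommGroup E] [InnerProductSpace ℝ E] {u : E → ℝ}

theorem norm_le_norm_add_of_inner_eq_zero {a v : E} (h : inner ℝ a v = 0) : ‖a‖ ≤ ‖a + v‖ := by
  have := norm_add_sq_eq_norm_sq_add_norm_sq_real h
  nlinarith [norm_nonneg a, norm_nonneg (a + v), mul_self_nonneg ‖v‖]

theorem fderiv_fderiv_apply_nonpos_of_inner_eq_zero (hu : ContDiff ℝ 2 u)
    (hmono : ∀ x y : E, ‖x‖ ≤ ‖y‖ → u y ≤ u x) {a v : E} (hav : inner ℝ a v = 0) :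
    fderiv ℝ (fderiv ℝ u) a v v ≤ 0 := by
  have hdiff : Differentiable ℝ u := hu.differentiable two_ne_zero
  have hdiff' : Differentiable ℝ (fderiv ℝ u) := (hu.fderiv_right le_rfl).differentiable one_ne_zero
  have hderiv : deriv (fun s : ℝ => u (a + s • v)) = fun s => fderiv ℝ u (a + s • v) v :=
    funext fun s => (hasDerivAt_comp_add_smul (hdiff _)).deriv
  have hmax : IsLocalMax (fun s : ℝ => u (a + s • v)) 0 :=
    Eventually.of_forall fun s => by
      simpa using hmono a _ (norm_le_norm_add_of_inner_eq_zero (by simp [inner_smul_right, hav]))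
  simpa [hderiv, (hasDerivAt_fderiv_apply_comp_add_smul (hdiff' _)).deriv] using
    hmax.deriv_deriv_nonpos (hasDerivAt_comp_add_smul (hdiff _)).continuousAt

end Radial

theorem sum_fderiv_fderiv_single_le {N : ℕ} {u : EuclideanSpace ℝ (Fin N) → ℝ}
    (hu : ContDiff ℝ 2 u) (hmono : ∀ x y : EuclideanSpace ℝ (Fin N), ‖x‖ ≤ ‖y‖ → u y ≤ u x)
    (i₀ : Fin N) (r : ℝ) :
    ∑ i, fderiv ℝ (fderiv ℝ u) (r • EuclideanSpace.single i₀ 1)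
        (EuclideanSpace.single i 1) (EuclideanSpace.single i 1) ≤
      fderiv ℝ (fderiv ℝ u) (r • EuclideanSpace.single i₀ 1)
        (EuclideanSpace.single i₀ 1) (EuclideanSpace.single i₀ 1) := by
  rw [← Finset.add_sum_erase _ _ (Finset.mem_univ i₀)]
  refine add_le_of_nonpos_right (Finset.sum_nonpos fun i hi => ?_)
  refine fderiv_fderiv_apply_nonpos_of_inner_eq_zero hu hmono ?_
  simp [inner_smul_left, EuclideanSpace.inner_single_left, Finset.ne_of_mem_erase hi]

/-- Comparison-principle decay estimate: if a positive `C²` radial, radially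
nonincreasing function satisfies `−Δu + (κ²/2)u ≤ 0` for `|x| ≥ R₀ = L₀/κ`, with
`u ≤ M` on `|x| = R₀` and `L₀ ≥ 2(N−1)`, then `u(x) ≤ M e^{L₀/2} e^{−κ|x|/2}`
for all `|x| ≥ R₀`. -/
theorem stmt17 (N : ℕ) (hN : 3 ≤ N) (L₀ κ M : ℝ)
    (hL₀ : 2 * ((N : ℝ) - 1) ≤ L₀) (hκ : 0 < κ)
    (u : EuclideanSpace ℝ (Fin N) → ℝ) (hu : ContDiff ℝ 2 u)
    (hupos : ∀ x, 0 < u x)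
    (hmono : ∀ x y : EuclideanSpace ℝ (Fin N), ‖x‖ ≤ ‖y‖ → u y ≤ u x)
    (hsub : ∀ x : EuclideanSpace ℝ (Fin N), L₀ / κ ≤ ‖x‖ →
      -(∑ i : Fin N, fderiv ℝ (fderiv ℝ u) x (EuclideanSpace.single i 1)
          (EuclideanSpace.single i 1)) + κ ^ 2 / 2 * u x ≤ 0)
    (hM : ∀ x : EuclideanSpace ℝ (Fin N), ‖x‖ = L₀ / κ → u x ≤ M) :
    ∀ x : EuclideanSpace ℝ (Fin N), L₀ / κ ≤ ‖x‖ →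
      u x ≤ M * Real.exp (L₀ / 2) * Real.exp (-(κ * ‖x‖) / 2) := by
  intro x hx
  have hR₀ : 0 < L₀ / κ := div_pos (by linarith [show (3 : ℝ) ≤ N by exact_mod_cast hN]) hκ
  set i₀ : Fin N := ⟨0, by omega⟩
  set e : EuclideanSpace ℝ (Fin N) := EuclideanSpace.single i₀ 1
  have hnorm : ∀ r : ℝ, 0 ≤ r → ‖r • e‖ = r := fun r hr => by
    simp [e, norm_smul, abs_of_nonneg hr]
  have hradial : u x = u (‖x‖ • e) :=
    le_antisymm (hmono _ _ (hnorm _ (norm_nonneg x)).le) (hmono _ _ (hnorm _ (norm_nonneg x)).ge)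
  have hdiff : Differentiable ℝ u := hu.differentiable two_ne_zero
  have hg : ∀ r : ℝ, HasDerivAt (fun r : ℝ => u (r • e)) (fderiv ℝ u (r • e) e) r :=
    fun _ => hasDerivAt_comp_smul (hdiff _)
  have hg' : ∀ r : ℝ, HasDerivAt (fun r : ℝ => fderiv ℝ u (r • e) e)
      (fderiv ℝ (fderiv ℝ u) (r • e) e e) r := fun r => by
    simpa using hasDerivAt_fderiv_apply_comp_add_smul (a := 0)
      (((hu.fderiv_right le_rfl).differentiable one_ne_zero) (0 + r • e))
  have hg'_nonpos : ∀ r ∈ Ici (L₀ / κ), fderiv ℝ u (r • e) e ≤ 0 := fun r hr =>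
    fderiv_smul_apply_nonpos hdiff hmono e (hR₀.le.trans hr)
  have hg'' : ∀ r ∈ Ici (L₀ / κ), (κ / 2) ^ 2 * u (r • e) ≤ fderiv ℝ (fderiv ℝ u) (r • e) e e :=
    fun r hr => by
      have := hsub (r • e) (by rwa [hnorm r (hR₀.le.trans hr)])
      nlinarith [sum_fderiv_fderiv_single_le hu hmono i₀ r, hupos (r • e)]
  have hdecay := antitoneOn_mul_exp_of_sq_mul_le_deriv2 (by positivity) hg hg' hg'_nonpos hg''
    self_mem_Ici hx hx
  have hexp : exp (κ / 2 * (L₀ / κ)) = exp (L₀ / 2) := by congr 1; field_simp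
  rw [hradial, show -(κ * ‖x‖) / 2 = -(κ / 2 * ‖x‖) by ring, exp_neg, ← div_eq_mul_inv,
    le_div_iff₀ (exp_pos _)]
  calc u (‖x‖ • e) * exp (κ / 2 * ‖x‖) ≤ u ((L₀ / κ) • e) * exp (κ / 2 * (L₀ / κ)) := hdecay
    _ ≤ M * exp (L₀ / 2) := by rw [hexp]; gcongr; exact hM _ (hnorm _ hR₀.le)
end
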